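/- arXiv:2310.05007 — 2 statements merged into one kernel-verified Lean document; each statement's English description precedes it below -/
import Mathlib

section
/- Let G be a finite nonempty simple graph with maximum degree Δ ≥ 1. The dominating set S produced by the greedy algorithm (repeatedly choosing the vertex covering the most uncovered vertices) satisfies |S| ≤ (ln Δ + 2) · |S*|, where S* is a minimum dominating set of G. -/
/-- `S` is a dominating set of `G`: every vertex is in `S` or adjacent to a vertex of `S`. -/
def IsDominating {V : Type*} (G : SimpleGraph V) (S : Finset V) : Prop :=
  ∀ v : V, v ∈ S ∨ ∃ s ∈ S, G.Adj s v

/-- The closed neighborhood of `v`: the set of vertices covered by `v`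
(`v` covers itself and its neighbors). -/
def closedNbhd {V : Type*} [Fintype V] [DecidableEq V] (G : SimpleGraph V)
    [DecidableRel G.Adj] (v : V) : Finset V :=
  insert v (G.neighborFinset v)

/-- `GreedyRun G U S` holds when `S` is a possible output of the greedy dominating set
algorithm started with uncovered set `U`: while some vertex is uncovered, it selects a
vertex covering the maximum number of currently uncovered vertices, adds it to the
output, and removes all vertices it covers from the uncovered set. -/
inductive GreedyRun {V : Type*} [Fintype V] [DecidableEq V] (G : SimpleGraph V)
    [DecidableRel G.Adj] : Finset V → Finset V → Prop
  | base : GreedyRun G ∅ ∅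
  | step {U S : Finset V} (v : V) (hU : U.Nonempty)
      (hmax : ∀ w : V, (closedNbhd G w ∩ U).card ≤ (closedNbhd G v ∩ U).card)
      (h : GreedyRun G (U \ closedNbhd G v) S) :
      GreedyRun G U (insert v S)

/-!
Let `T` be any dominating set with `k = |T|` vertices. While `u` vertices are uncovered,
the closed neighbourhoods of `T` cover them, so the greedy vertex covers at least `u / k`
of them and at most `u (1 - 1/k)` remain. The potential `φ(u) = u` for `u ≤ k`,
`φ(u) = k + k log (u / k)` for `u ≥ k`, drops by at least one per step, so the greedy run
has at most `φ(n)` steps. Finally `n ≤ k (Δ + 1)` gives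
`φ(n) ≤ k (1 + log (Δ + 1)) ≤ k (log Δ + 2)`.
-/

open Finset Real

noncomputable def greedyPotential (k u : ℕ) : ℝ :=
  if u ≤ k then u else k + k * log (u / k)

lemma greedyPotential_zero (k : ℕ) : greedyPotential k 0 = 0 := by
  simp [greedyPotential]

lemma greedyPotential_of_le {k u : ℕ} (hk : 0 < k) (h : k ≤ u) :
    greedyPotential k u = k + k * log (u / k) := by
  rcases h.eq_or_lt with rfl | hlt
  · have : (k : ℝ) ≠ 0 := by positivity
    simp [greedyPotential, this]
  · simp [greedyPotential, not_le.2 hlt]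

lemma one_le_mul_log_div {k u u' : ℝ} (hk : 0 ≤ k) (hu : 0 < u) (hu' : 0 < u')
    (h : k * u' + u ≤ k * u) : 1 ≤ k * log (u / u') := by
  have hlog : 1 - u' / u ≤ log (u / u') := by
    simpa using one_sub_inv_le_log_of_pos (div_pos hu hu')
  calc (1 : ℝ) ≤ k * (1 - u' / u) := by
        rw [show k * (1 - u' / u) = (k * u - k * u') / u by field_simp, le_div_iff₀ hu]
        linarith
    _ ≤ k * log (u / u') := mul_le_mul_of_nonneg_left hlog hk

lemma greedyPotential_add_one_le {k u u' : ℕ} (hk : 0 < k) (hu : 0 < u)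
    (h : k * u' + u ≤ k * u) : greedyPotential k u' + 1 ≤ greedyPotential k u := by
  have hlt : u' < u := by nlinarith
  have hkR : (0 : ℝ) < k := by exact_mod_cast hk
  rcases le_or_gt u k with huk | hku
  · rw [greedyPotential, greedyPotential, if_pos huk, if_pos (hlt.le.trans huk)]
    exact_mod_cast hlt
  rw [greedyPotential_of_le hk hku.le]
  rcases lt_or_ge u' k with hu'k | hku'
  · have hlog : 0 ≤ log (u / k) := log_nonneg <| by
      rw [le_div_iff₀ hkR, one_mul]; exact_mod_cast hku.le
    have : (u' : ℝ) + 1 ≤ k := by exact_mod_cast hu'k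
    rw [greedyPotential, if_pos hu'k.le]
    nlinarith
  · have hu'R : (0 : ℝ) < u' := by exact_mod_cast hk.trans_le hku'
    have hstep := one_le_mul_log_div (u := u) hkR.le (by exact_mod_cast hu) hu'R
      (by exact_mod_cast h)
    have hsplit : log (u / k) = log (u / u') + log (u' / k) := by
      rw [← log_mul (by positivity) (by positivity), div_mul_div_cancel₀ hu'R.ne']
    rw [greedyPotential_of_le hk hku', hsplit, mul_add]
    linarith

lemma log_add_one_le_log_add_one {x : ℝ} (hx : 1 ≤ x) : log (x + 1) ≤ log x + 1 := by
  have hx0 : 0 < x := by linarith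
  have hexp : x + 1 ≤ x * exp 1 := by nlinarith [add_one_le_exp (1 : ℝ)]
  calc log (x + 1) ≤ log (x * exp 1) := log_le_log (by linarith) hexp
    _ = log x + 1 := by rw [log_mul hx0.ne' (exp_pos 1).ne', log_exp]

lemma greedyPotential_le_of_le_mul {k u m : ℕ} (hk : 0 < k) (hm : 1 ≤ m) (h : u ≤ k * m) :
    greedyPotential k u ≤ k * (1 + log m) := by
  have hkR : (0 : ℝ) < k := by exact_mod_cast hk
  have hlogm : 0 ≤ log m := log_nonneg (by exact_mod_cast hm)
  rcases le_or_gt u k with huk | hku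
  · rw [greedyPotential, if_pos huk]
    have : (u : ℝ) ≤ k := by exact_mod_cast huk
    nlinarith
  · rw [greedyPotential_of_le hk hku.le, mul_add, mul_one]
    have hum : (u : ℝ) / k ≤ m := by
      rw [div_le_iff₀ hkR, mul_comm]; exact_mod_cast h
    have hu : (0 : ℝ) < u := by exact_mod_cast hk.trans hku
    gcongr

section Domination

variable {V : Type*} [Fintype V] [DecidableEq V] {G : SimpleGraph V} [DecidableRel G.Adj]

lemma card_closedNbhd (v : V) : (closedNbhd G v).card = G.degree v + 1 := by
  rw [closedNbhd, card_insert_of_notMem (by simp), SimpleGraph.card_neighborFinset_eq_degree]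

lemma IsDominating.exists_mem_closedNbhd {T : Finset V} (hT : IsDominating G T) (v : V) :
    ∃ s ∈ T, v ∈ closedNbhd G s := by
  rcases hT v with hv | ⟨s, hs, hadj⟩
  · exact ⟨v, hv, mem_insert_self v _⟩
  · exact ⟨s, hs, mem_insert_of_mem (by simpa using hadj)⟩

lemma IsDominating.card_pos [Nonempty V] {T : Finset V} (hT : IsDominating G T) :
    0 < T.card :=
  let ⟨s, hs, _⟩ := hT.exists_mem_closedNbhd (Classical.arbitrary V)
  Finset.card_pos.2 ⟨s, hs⟩

lemma IsDominating.card_le_mul {T : Finset V} (hT : IsDominating G T) {U : Finset V} {c : ℕ}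
    (hc : ∀ w, (closedNbhd G w ∩ U).card ≤ c) : U.card ≤ T.card * c := by
  have hcover : U ⊆ T.biUnion (fun s => closedNbhd G s ∩ U) := fun x hx => by
    obtain ⟨s, hs, hxs⟩ := hT.exists_mem_closedNbhd x
    exact mem_biUnion.2 ⟨s, hs, mem_inter.2 ⟨hxs, hx⟩⟩
  exact (card_le_card hcover).trans (card_biUnion_le_card_mul _ _ _ fun s _ => hc s)

lemma GreedyRun.card_le_greedyPotential {T : Finset V} (hT : IsDominating G T)
    (hk : 0 < T.card) {U S : Finset V} (h : GreedyRun G U S) :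
    (S.card : ℝ) ≤ greedyPotential T.card U.card := by
  induction h with
  | base => simp [greedyPotential_zero]
  | @step U S v hU hmax _ ih =>
    have hsplit := card_sdiff_add_card_inter U (closedNbhd G v)
    have hcover : U.card ≤ T.card * (closedNbhd G v ∩ U).card := hT.card_le_mul hmax
    have hdrop := greedyPotential_add_one_le (u' := (U \ closedNbhd G v).card) hk hU.card_pos
      (by rw [inter_comm] at hcover; nlinarith)
    have hins : ((insert v S).card : ℝ) ≤ S.card + 1 := by exact_mod_cast card_insert_le v S
    linarith

end Domination

theorem greedy_approximation_general {V : Type*} [Fintype V] [DecidableEq V] [Nonempty V]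
    (G : SimpleGraph V) [DecidableRel G.Adj] (hΔ : 1 ≤ G.maxDegree)
    (S Sstar : Finset V)
    (hS : GreedyRun G Finset.univ S)
    (hSstar : IsDominating G Sstar) :
    (S.card : ℝ) ≤ (Real.log G.maxDegree + 2) * Sstar.card := by
  have hk := hSstar.card_pos
  have hn : (univ : Finset V).card ≤ Sstar.card * (G.maxDegree + 1) :=
    hSstar.card_le_mul fun w => calc
      (closedNbhd G w ∩ univ).card ≤ (closedNbhd G w).card := card_le_card inter_subset_left
      _ = G.degree w + 1 := card_closedNbhd w
      _ ≤ G.maxDegree + 1 := Nat.succ_le_succ (G.degree_le_maxDegree w)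
  have hlog := log_add_one_le_log_add_one (x := G.maxDegree) (by exact_mod_cast hΔ)
  calc (S.card : ℝ) ≤ greedyPotential Sstar.card univ.card :=
        hS.card_le_greedyPotential hSstar hk
    _ ≤ Sstar.card * (1 + log ↑(G.maxDegree + 1)) :=
        greedyPotential_le_of_le_mul hk (Nat.le_add_left 1 _) hn
    _ ≤ (log G.maxDegree + 2) * Sstar.card := by push_cast; nlinarith

/-- For a finite nonempty simple graph `G` with maximum degree `Δ ≥ 1`, the dominating
set `S` produced by the greedy algorithm satisfies `|S| ≤ (ln Δ + 2) · |S*|`, where `S*`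
is a minimum dominating set of `G`. -/
theorem greedy_approximation {V : Type*} [Fintype V] [DecidableEq V] [Nonempty V]
    (G : SimpleGraph V) [DecidableRel G.Adj] (hΔ : 1 ≤ G.maxDegree)
    (S Sstar : Finset V)
    (hS : GreedyRun G Finset.univ S)
    (hSstar : IsDominating G Sstar)
    (hmin : ∀ T : Finset V, IsDominating G T → Sstar.card ≤ T.card) :
    (S.card : ℝ) ≤ (Real.log G.maxDegree + 2) * Sstar.card :=
  greedy_approximation_general G hΔ S Sstar hS hSstar
end

section
/- Let f : ℕ → ℕ count, at each greedy iteration, the number of newly covered vertices, and suppose at some iteration the greedy algorithm covers k new vertices while some vertex v of the optimal dominating set could still cover m ≤ k uncovered vertices. If each newly covered vertex in that iteration is charged cost 1/k, then the total cost charged to the at most d(v)+1 vertices of the star centered at v over the run of the algorithm is at most H(d(v)+1), where H is the harmonic number. -/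
lemma harmonic_mono' : Monotone harmonic := by
  intro a b hab
  unfold harmonic
  apply Finset.sum_le_sum_of_subset_of_nonneg (Finset.range_subset_range.2 hab)
  intros; positivity

lemma harmonic_sub_ge (a b : ℕ) (hba : b ≤ a) :
    ((a - b : ℕ) : ℝ) / a ≤ (harmonic a : ℝ) - (harmonic b : ℝ) := by
  rcases Nat.eq_zero_or_pos a with rfl | ha
  · interval_cases b; simp
  have : (harmonic a : ℝ) - harmonic b = ∑ i ∈ Finset.Ico b a, ((i : ℝ) + 1)⁻¹ := by
    unfold harmonic
    push_cast
    rw [Finset.sum_Ico_eq_sub _ hba]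
  rw [this]
  have h1 : ∀ i ∈ Finset.Ico b a, (a : ℝ)⁻¹ ≤ ((i : ℝ) + 1)⁻¹ := by
    intro i hi
    rw [Finset.mem_Ico] at hi
    apply inv_anti₀ (by positivity)
    exact_mod_cast Nat.succ_le_of_lt hi.2
  calc ((a - b : ℕ) : ℝ) / a = (Finset.Ico b a).card * (a : ℝ)⁻¹ := by
        rw [Nat.card_Ico]; rw [div_eq_mul_inv]
      _ = ∑ _i ∈ Finset.Ico b a, (a : ℝ)⁻¹ := by
        rw [Finset.sum_const, Nat.card_Ico, nsmul_eq_mul]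
      _ ≤ ∑ i ∈ Finset.Ico b a, ((i : ℝ) + 1)⁻¹ := Finset.sum_le_sum h1

/-- Amortized charging argument for the greedy dominating set algorithm, for the star
centered at a vertex `v` of the optimal dominating set with degree `d(v) = d`.
Over `m` iterations, `r i` is the number of still-uncovered vertices of the star (so
`r 0 ≤ d + 1`, `r` is decreasing, and `r m = 0`), and at iteration `i` the greedy
algorithm covers `k i` new vertices while `v` could still cover `r i ≤ k i` uncovered
vertices. The `r i − r (i+1)` newly covered star vertices of iteration `i` are each
charged `1 / k i`; the total cost charged to the at most `d + 1` vertices of the star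
over the run of the algorithm is at most the harmonic number `H(d + 1)`. -/
theorem greedy_star_charge_le_harmonic (d m : ℕ) (r k : ℕ → ℕ)
    (hr0 : r 0 ≤ d + 1)
    (hmono : ∀ i, r (i + 1) ≤ r i)
    (hgreedy : ∀ i < m, r i ≤ k i)
    (hend : r m = 0) :
    ∑ i ∈ Finset.range m, ((r i - r (i + 1) : ℕ) : ℝ) / (k i) ≤
      (harmonic (d + 1) : ℝ) := by
  have step : ∀ i ∈ Finset.range m,
      ((r i - r (i + 1) : ℕ) : ℝ) / (k i) ≤
        (harmonic (r i) : ℝ) - (harmonic (r (i + 1)) : ℝ) := by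
    intro i hi
    rw [Finset.mem_range] at hi
    rcases Nat.eq_zero_or_pos (r i) with h0 | hpos
    · have : r (i + 1) = 0 := Nat.le_zero.mp (h0 ▸ hmono i)
      simp [h0, this]
    · refine le_trans ?_ (harmonic_sub_ge _ _ (hmono i))
      apply div_le_div_of_nonneg_left (by positivity) (by exact_mod_cast hpos)
      exact_mod_cast hgreedy i hi
  calc ∑ i ∈ Finset.range m, ((r i - r (i + 1) : ℕ) : ℝ) / (k i)
      ≤ ∑ i ∈ Finset.range m, ((harmonic (r i) : ℝ) - (harmonic (r (i + 1)) : ℝ)) :=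
        Finset.sum_le_sum step
    _ = (harmonic (r 0) : ℝ) - (harmonic (r m) : ℝ) :=
        Finset.sum_range_sub' (fun i => (harmonic (r i) : ℝ)) m
    _ ≤ (harmonic (d + 1) : ℝ) := by
        rw [hend]
        simp only [harmonic_zero, Rat.cast_zero, sub_zero]
        exact_mod_cast harmonic_mono' hr0
end
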